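/- arXiv:2605.24084 — 6 statements merged into one kernel-verified Lean document; each statement's English description precedes it below -/
import Mathlib

section
/- For natural numbers n, r, s with r ≤ s ≤ n-1, the following identity holds: (1/n) · ∑_{k=0}^{n-1-s} C(n-1-s, k) / C(n-1, k+r) = 1 / ((s+1) · C(s, r)). -/
/-!
With `m = n - 1`, `s = r + u` and `m = s + t`, each summand rewrites as
`C(m - s, k) / C(m, k + r) = C(r + k, r) C(u + t - k, u) / (C(m, s) C(s, r))`.
The numerators sum to `C(m + 1, s + 1)` by the upper Vandermonde identity, and
`(m + 1) C(m, s) = (s + 1) C(m + 1, s + 1)` finishes the computation.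
-/

open Finset

open PowerSeries in
/-- Upper Vandermonde identity: compare the coefficients of `X ^ M` in
`(1 - X)⁻¹ ^ (a + 1) * (1 - X)⁻¹ ^ (b + 1) = (1 - X)⁻¹ ^ (a + b + 2)`. -/
theorem Nat.sum_range_add_choose_mul_add_choose (a b M : ℕ) :
    ∑ k ∈ range (M + 1), (a + k).choose a * (b + (M - k)).choose b
      = (a + b + 1 + M).choose (a + b + 1) := by
  have h := congrArg (fun f : ℤ⟦X⟧ˣ => coeff M (f : ℤ⟦X⟧)) (invOneSubPow_add ℤ (a + 1) (b + 1))
  simp only [Units.val_mul, coeff_mul, show a + 1 + (b + 1) = a + b + 1 + 1 by ring,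
    invOneSubPow_val_succ_eq_mk_add_choose, coeff_mk, Nat.sum_antidiagonal_eq_sum_range_succ
      (fun i j => ((a + i).choose a : ℤ) * (b + j).choose b)] at h
  exact_mod_cast h.symm

/-- Both sides equal `(k + l)! (k + r)! (u + l)! / (k! l! (r + u + k + l)!)`. -/
theorem Nat.cast_choose_div_choose {K : Type*} [Field K] [CharZero K] (r u k l : ℕ) :
    ((k + l).choose k : K) / (r + u + (k + l)).choose (k + r)
      = (r + k).choose r * (u + l).choose u
          / ((r + u + (k + l)).choose (r + u) * (r + u).choose r) := by
  have hfact : ∀ n : ℕ, (n.factorial : K) ≠ 0 := fun n => Nat.cast_ne_zero.2 n.factorial_ne_zero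
  rw [show r + u + (k + l) = k + r + (u + l) by ring, Nat.cast_add_choose, Nat.cast_add_choose,
    Nat.cast_add_choose, Nat.cast_add_choose, show k + r + (u + l) = r + u + (k + l) by ring,
    Nat.cast_add_choose, Nat.cast_add_choose, add_comm k r]
  field_simp [hfact]

theorem stmt_0 (n r s : ℕ) (hn : 1 ≤ n) (hrs : r ≤ s) (hs : s ≤ n - 1) :
    (1 / (n : ℝ)) *
      ∑ k ∈ Finset.range (n - 1 - s + 1),
        ((n - 1 - s).choose k : ℝ) / ((n - 1).choose (k + r) : ℝ)
      = 1 / (((s : ℝ) + 1) * (s.choose r : ℝ)) := by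
  obtain ⟨m, rfl⟩ := Nat.exists_eq_add_of_le' hn
  obtain ⟨t, rfl⟩ := Nat.exists_eq_add_of_le (by simpa using hs)
  obtain ⟨u, rfl⟩ := Nat.exists_eq_add_of_le hrs
  simp only [Nat.add_sub_cancel, Nat.add_sub_cancel_left]
  have hterm : ∀ k ∈ range (t + 1), (t.choose k : ℝ) / (r + u + t).choose (k + r)
      = (r + k).choose r * (u + (t - k)).choose u
          / ((r + u + t).choose (r + u) * (r + u).choose r) := by
    intro k hk
    have h := Nat.cast_choose_div_choose (K := ℝ) r u k (t - k)
    rwa [Nat.add_sub_cancel' (by simpa [Nat.lt_succ_iff] using hk)] at h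
  have hpascal : ((r + u + 1 + t).choose (r + u + 1) : ℝ)
      = (r + u + t + 1) * (r + u + t).choose (r + u) / (r + u + 1) := by
    rw [eq_div_iff (by positivity), show r + u + 1 + t = r + u + t + 1 by ring]
    exact_mod_cast (Nat.add_one_mul_choose_eq _ _).symm
  have hvandermonde : ∑ k ∈ range (t + 1), ((r + k).choose r : ℝ) * (u + (t - k)).choose u
      = (r + u + 1 + t).choose (r + u + 1) := by
    exact_mod_cast Nat.sum_range_add_choose_mul_add_choose r u t
  have hsr : ((r + u).choose r : ℝ) ≠ 0 := Nat.cast_ne_zero.2 (Nat.choose_pos (by omega)).ne'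
  have hts : ((r + u + t).choose (r + u) : ℝ) ≠ 0 :=
    Nat.cast_ne_zero.2 (Nat.choose_pos (by omega)).ne'
  rw [sum_congr rfl hterm, ← sum_div, hvandermonde, hpascal]
  push_cast
  field_simp
end

section
/- Let I, E ⊆ {1, ..., n} \ {i} be disjoint sets and let B := {S ⊆ {1, ..., n} \ {i} : I ⊆ S and E ∩ S = ∅}. With r := |I| and s := |I| + |E|, it holds that ∑_{S ∈ B} 1/(n · C(n-1, |S|)) = 1/((s+1) · C(s, r)). -/
/-!
Splitting a branch on a feature `x` that is neither forced in nor out gives the two branches with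
`x` added to `I` and to `E`. The claimed value `1 / ((s + 1) C(s, r)) = r! e! / (s + 1)!` is the
Beta value `B(r + 1, e + 1)`, which satisfies the same recursion
`B(r + 1, e + 1) = B(r + 2, e + 1) + B(r + 1, e + 2)`; when no feature is free the branch is `{I}`.
-/

open Finset

open scoped Nat

noncomputable def natBeta (a b : ℕ) : ℝ := (a ! * b ! : ℝ) / (a + b + 1)!

theorem natBeta_eq_add (a b : ℕ) : natBeta a b = natBeta (a + 1) b + natBeta a (b + 1) := by
  simp only [natBeta, show a + 1 + b + 1 = (a + b + 1) + 1 by ring,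
    show a + (b + 1) + 1 = (a + b + 1) + 1 by ring, Nat.factorial_succ]
  push_cast
  field_simp
  ring

theorem natBeta_sub_eq_one_div {N k : ℕ} (h : k ≤ N) :
    natBeta k (N - k) = 1 / (((N : ℝ) + 1) * N.choose k) := by
  have hN : ((N.choose k * k ! * (N - k)! : ℕ) : ℝ) = N ! := by
    rw [Nat.choose_mul_factorial_mul_factorial h]
  push_cast at hN
  have := Nat.choose_pos h
  rw [natBeta, Nat.add_sub_cancel' h, Nat.factorial_succ]
  push_cast
  rw [← hN]
  field_simp

section Branch

variable {α : Type*} [DecidableEq α]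

def branch (U I E : Finset α) : Finset (Finset α) :=
  U.powerset.filter fun S => I ⊆ S ∧ Disjoint E S

theorem branch_of_union_eq {U I E : Finset α} (hIE : Disjoint I E) (hU : I ∪ E = U) :
    branch U I E = {I} := by
  ext S
  simp only [branch, mem_filter, mem_powerset, mem_singleton, ← hU]
  constructor
  · rintro ⟨hSU, hIS, hES⟩
    refine Subset.antisymm ?_ hIS
    intro x hx
    rcases mem_union.1 (hSU hx) with h | h
    · exact h
    · exact absurd hx (disjoint_left.1 hES h)
  · rintro rfl
    exact ⟨subset_union_left, Subset.rfl, hIE.symm⟩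

theorem filter_mem_branch (U I E : Finset α) (x : α) :
    (branch U I E).filter (x ∈ ·) = branch U (insert x I) E := by
  ext S
  simp only [branch, mem_filter, insert_subset_iff]
  tauto

theorem filter_not_mem_branch (U I E : Finset α) (x : α) :
    (branch U I E).filter (x ∉ ·) = branch U I (insert x E) := by
  ext S
  simp only [branch, mem_filter, disjoint_insert_left]
  tauto

theorem sum_branch_natBeta (U I E : Finset α) (hIE : Disjoint I E) (hI : I ⊆ U) (hE : E ⊆ U) :
    ∑ S ∈ branch U I E, natBeta #S (#U - #S) = natBeta #I #E := by
  obtain ⟨x, hx⟩ | hfree := (U \ (I ∪ E)).eq_empty_or_nonempty.symm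
  · obtain ⟨hxU, hxIE⟩ := mem_sdiff.1 hx
    have hxI : x ∉ I := fun h => hxIE (mem_union_left E h)
    have hxE : x ∉ E := fun h => hxIE (mem_union_right I h)
    rw [← sum_filter_add_sum_filter_not _ (x ∈ ·), filter_mem_branch, filter_not_mem_branch,
      sum_branch_natBeta U (insert x I) E (disjoint_insert_left.2 ⟨hxE, hIE⟩)
        (insert_subset hxU hI) hE,
      sum_branch_natBeta U I (insert x E) (disjoint_insert_right.2 ⟨hxI, hIE⟩) hI
        (insert_subset hxU hE),
      card_insert_of_notMem hxI, card_insert_of_notMem hxE, ← natBeta_eq_add]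
  · have hU : I ∪ E = U := Subset.antisymm (union_subset hI hE) (sdiff_eq_empty_iff_subset.1 hfree)
    rw [branch_of_union_eq hIE hU, sum_singleton, ← hU, card_union_of_disjoint hIE,
      Nat.add_sub_cancel_left]
termination_by #(U \ (I ∪ E))
decreasing_by
  all_goals
    exact card_lt_card ((ssubset_iff_of_subset (sdiff_subset_sdiff Subset.rfl (by grind))).2
      ⟨x, hx, by simp⟩)

end Branch

theorem stmt_8_general (n : ℕ) (i : Fin n) (I E : Finset (Fin n))
    (hI : I ⊆ (Finset.univ : Finset (Fin n)) \ {i})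
    (hE : E ⊆ (Finset.univ : Finset (Fin n)) \ {i})
    (hIE : Disjoint I E) :
    ∑ S ∈ (((Finset.univ : Finset (Fin n)) \ {i}).powerset.filter
          (fun S => I ⊆ S ∧ Disjoint E S)),
        (1 : ℝ) / ((n : ℝ) * ((n - 1).choose S.card : ℝ))
      = 1 / ((((I.card + E.card : ℕ) : ℝ) + 1) *
          ((I.card + E.card).choose I.card : ℝ)) := by
  set U : Finset (Fin n) := univ \ {i}
  have hU : #U = n - 1 := by simp [U, card_sdiff]
  have hn : ((n - 1 : ℕ) : ℝ) + 1 = n := by rw [Nat.cast_sub i.pos]; ring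
  calc _ = ∑ S ∈ branch U I E, natBeta #S (#U - #S) := by
        refine sum_congr rfl fun S hS => ?_
        have hSU : #S ≤ #U := card_le_card (mem_powerset.1 (mem_filter.1 hS).1)
        rw [hU] at hSU ⊢
        rw [natBeta_sub_eq_one_div hSU, hn]
    _ = natBeta #I #E := sum_branch_natBeta U I E hIE hI hE
    _ = _ := by rw [← natBeta_sub_eq_one_div (Nat.le_add_right _ _), Nat.add_sub_cancel_left]

theorem stmt_8 (n : ℕ) (hn : 1 ≤ n) (i : Fin n) (I E : Finset (Fin n))
    (hI : I ⊆ (Finset.univ : Finset (Fin n)) \ {i})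
    (hE : E ⊆ (Finset.univ : Finset (Fin n)) \ {i})
    (hIE : Disjoint I E) :
    ∑ S ∈ (((Finset.univ : Finset (Fin n)) \ {i}).powerset.filter
          (fun S => I ⊆ S ∧ Disjoint E S)),
        (1 : ℝ) / ((n : ℝ) * ((n - 1).choose S.card : ℝ))
      = 1 / ((((I.card + E.card : ℕ) : ℝ) + 1) *
          ((I.card + E.card).choose I.card : ℝ)) :=
  stmt_8_general n i I E hI hE hIE
end

section
/- Let f(x) = wᵀx + b be a linear function on ℝ^n, fix x ∈ ℝ^n and a finite background set D with mean z̄. Then the Shapley value φ_i := ∑_{S ⊆ [n]\{i}} (|S|!(n-|S|-1)!/n!) · (v(S ∪ {i}) − v(S)), with v(S) := E_{z ∼ D}[f(x_S ; z_{S̄})], equals w_i · (x_i − z̄_i). -/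
/-!
For a linear model, adding feature `i` to a coalition `S` changes `f(x_S ; z_{S̄})` by exactly
`w_i (x_i - z_i)`, whatever `S` is; averaging over the background set turns this into
`w_i (x_i - z̄_i)`. So every marginal contribution in the Shapley sum is the same number, and the
Shapley weights sum to one because the `choose (n-1) k` coalitions of size `k` carry weight
`k! (n-1-k)! / n! = 1 / (n * choose (n-1) k)` each.
-/

open Finset

section ShapleyWeights

variable {ι : Type*} [Fintype ι] [DecidableEq ι]

theorem choose_mul_shapleyWeight {n k : ℕ} (hk : k ≤ n - 1) (hn : 1 ≤ n) :
    ((n - 1).choose k : ℝ) * (((k.factorial * (n - k - 1).factorial : ℕ) : ℝ) / n.factorial)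
      = 1 / n := by
  have hfac : (n - 1).choose k * (k.factorial * (n - k - 1).factorial) = (n - 1).factorial := by
    rw [Nat.sub_right_comm, ← Nat.choose_mul_factorial_mul_factorial hk, mul_assoc]
  rw [← Nat.mul_factorial_pred (by omega : n ≠ 0), ← mul_div_assoc, ← Nat.cast_mul, hfac]
  have hn' : (n : ℝ) ≠ 0 := by positivity
  have hf : ((n - 1).factorial : ℝ) ≠ 0 := by positivity
  push_cast
  field_simp

theorem sum_shapleyWeight_eq_one (i : ι) :
    ∑ S ∈ (univ \ {i}).powerset,
        ((S.card.factorial * (Fintype.card ι - S.card - 1).factorial : ℕ) : ℝ)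
          / (Fintype.card ι).factorial = 1 := by
  set n := Fintype.card ι
  have hn : 1 ≤ n := Fintype.card_pos_iff.mpr ⟨i⟩
  have hcard : (univ \ {i} : Finset ι).card = n - 1 := by
    rw [card_sdiff_of_subset (subset_univ _), card_univ, card_singleton]
  rw [sum_powerset_apply_card (fun k => ((k.factorial * (n - k - 1).factorial : ℕ) : ℝ)
    / n.factorial), hcard]
  simp only [nsmul_eq_mul]
  rw [sum_congr rfl fun k hk => choose_mul_shapleyWeight (Nat.lt_succ_iff.mp (mem_range.mp hk)) hn,
    sum_const, card_range, Nat.succ_eq_add_one, Nat.sub_add_cancel hn, nsmul_eq_mul]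
  have : (n : ℝ) ≠ 0 := by positivity
  field_simp

end ShapleyWeights

theorem ite_mem_insert_eq_update {ι : Type*} [DecidableEq ι] (S : Finset ι) (i : ι) (x z : ι → ℝ) :
    (fun j => if j ∈ insert i S then x j else z j)
      = Function.update (fun j => if j ∈ S then x j else z j) i (x i) := by
  ext j
  rcases eq_or_ne j i with rfl | hji
  · simp
  · simp [hji]

section LinearModel

variable {ι : Type*} [Fintype ι] [DecidableEq ι]

theorem sum_mul_update_sub_sum_mul (w y : ι → ℝ) (i : ι) (a : ℝ) :
    ∑ j, w j * Function.update y i a j - ∑ j, w j * y j = w i * (a - y i) := by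
  rw [← sum_sub_distrib, sum_eq_single i]
  · simp [mul_sub]
  · intro j _ hji
    simp [hji]
  · simp

theorem linear_marginal_contribution {f : (ι → ℝ) → ℝ} {w : ι → ℝ} {b : ℝ}
    (hf : ∀ y, f y = (∑ j, w j * y j) + b) (x z : ι → ℝ) {S : Finset ι} {i : ι} (hi : i ∉ S) :
    f (fun j => if j ∈ insert i S then x j else z j) - f (fun j => if j ∈ S then x j else z j)
      = w i * (x i - z i) := by
  rw [ite_mem_insert_eq_update, hf, hf, add_sub_add_right_eq_sub, sum_mul_update_sub_sum_mul]
  simp [hi]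

end LinearModel

theorem stmt_10 (n : ℕ) (w : Fin n → ℝ) (b : ℝ) (x : Fin n → ℝ)
    (D : Finset (Fin n → ℝ)) (hD : D.Nonempty)
    (f : (Fin n → ℝ) → ℝ) (hf : ∀ y, f y = (∑ j, w j * y j) + b)
    (v : Finset (Fin n) → ℝ)
    (hv : ∀ S : Finset (Fin n),
      v S = (∑ z ∈ D, f (fun j => if j ∈ S then x j else z j)) / D.card)
    (i : Fin n) :
    ∑ S ∈ ((Finset.univ : Finset (Fin n)) \ {i}).powerset,
        ((S.card.factorial * (n - S.card - 1).factorial : ℕ) : ℝ) / (n.factorial : ℝ)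
          * (v (insert i S) - v S)
      = w i * (x i - (∑ z ∈ D, z i) / D.card) := by
  have hD' : (D.card : ℝ) ≠ 0 := by exact_mod_cast hD.card_pos.ne'
  have marginal : ∀ S ∈ (univ \ {i} : Finset (Fin n)).powerset,
      v (insert i S) - v S = w i * (x i - (∑ z ∈ D, z i) / D.card) := by
    intro S hS
    have hi : i ∉ S := fun h => by simpa using mem_powerset.mp hS h
    rw [hv, hv, ← sub_div, ← sum_sub_distrib,
      sum_congr rfl fun z _ => linear_marginal_contribution hf x z hi, ← mul_sum, sum_sub_distrib,
      sum_const, nsmul_eq_mul]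
    field_simp
  have weights := sum_shapleyWeight_eq_one i
  rw [Fintype.card_fin] at weights
  rw [sum_congr rfl fun S hS => by rw [marginal S hS], ← sum_mul, weights, one_mul]
end

section
/- Let I, E ⊆ {1, ..., n} be disjoint with i ∈ I, and let B := {S ⊆ {1, ..., n} : I ⊆ S, E ∩ S = ∅}. Let r := |I|, s := |I| + |E|. Then ∑_{S ∈ B} w(|S| − 1) = ((s+1)/r) · 1/((s+1) · C(s, r)), where w(k) := 1/(n · C(n-1, k)); equivalently, ∑_{S ∈ B} w(|S| − 1) = 1/(r · C(s, r)). -/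
/-
The Shapley weight of a coalition of size k + 1 among n players is the
Beta integral `1 / (n * C(n - 1, k)) = B(k + 1, n - k) = k! (n - 1 - k)! / n!`. The recursion
`B(a, b) = B(a + 1, b) + B(a, b + 1)` lets the players outside I ∪ E be added one at a time, each
splitting a branch into the coalitions with and without that player, so the branch sums to
`B(|I|, |E| + 1) = 1 / (|I| C(|I| + |E|, |I|))`.
-/

open Finset

open Nat in
/-- `betaNat a b = B(a + 1, b + 1)`. -/
noncomputable def betaNat (a b : ℕ) : ℝ := a ! * b ! / (a + b + 1)!

theorem betaNat_eq_add (a b : ℕ) : betaNat a b = betaNat (a + 1) b + betaNat a (b + 1) := by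
  unfold betaNat
  rw [show a + 1 + b + 1 = a + b + 1 + 1 by ring, show a + (b + 1) + 1 = a + b + 1 + 1 by ring]
  simp only [Nat.factorial_succ]
  push_cast
  field_simp
  ring

theorem one_div_mul_choose_eq_betaNat {N a b : ℕ} (h : a + b + 1 = N) :
    1 / ((N : ℝ) * (N - 1).choose a) = betaNat a b := by
  subst h
  rw [betaNat, Nat.add_sub_cancel, Nat.cast_add_choose, Nat.factorial_succ (a + b)]
  push_cast
  field_simp

theorem betaNat_eq_one_div_mul_choose (a b : ℕ) :
    betaNat a b = 1 / ((a + 1 : ℕ) * (a + 1 + b).choose (a + 1) : ℝ) := by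
  rw [betaNat, Nat.cast_add_choose, show a + 1 + b = a + b + 1 by ring, Nat.factorial_succ a]
  push_cast
  field_simp

theorem sum_powerset_betaNat {α : Type*} [DecidableEq α] (U : Finset α) (a b : ℕ) :
    ∑ T ∈ U.powerset, betaNat (a + #T) (b + #(U \ T)) = betaNat a b := by
  induction U using Finset.induction_on generalizing a b with
  | empty => simp
  | insert x U hx ih =>
    rw [sum_powerset_insert hx, betaNat_eq_add, ← ih (a + 1) b, ← ih a (b + 1), add_comm]
    congr 1 <;> refine sum_congr rfl fun T hT => ?_
    · have hxT : x ∉ T := fun h => hx (mem_powerset.1 hT h)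
      rw [card_insert_of_notMem hxT, insert_sdiff_insert, sdiff_insert_of_notMem hx]
      ring_nf
    · rw [insert_sdiff_of_notMem _ fun h => hx (mem_powerset.1 hT h),
        card_insert_of_notMem fun h => hx (mem_sdiff.1 h).1]
      ring_nf

theorem filter_powerset_univ_eq_Icc {α : Type*} [Fintype α] [DecidableEq α] (I E : Finset α) :
    (univ : Finset α).powerset.filter (fun S => I ⊆ S ∧ Disjoint E S) = Icc I Eᶜ := by
  ext S
  simp [subset_compl_iff_disjoint_left]

theorem stmt_12_general (n : ℕ) (i : Fin n) (I E : Finset (Fin n))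
    (hIE : Disjoint I E) (hiI : i ∈ I) :
    ∑ S ∈ ((Finset.univ : Finset (Fin n)).powerset.filter
          (fun S => I ⊆ S ∧ Disjoint E S)),
        (1 : ℝ) / ((n : ℝ) * ((n - 1).choose (S.card - 1) : ℝ))
      = 1 / ((I.card : ℝ) * ((I.card + E.card).choose I.card : ℝ)) := by
  obtain ⟨t, ht⟩ : ∃ t, #I = t + 1 := Nat.exists_eq_add_one.2 (card_pos.2 ⟨i, hiI⟩)
  have hIEc : I ⊆ Eᶜ := subset_compl_iff_disjoint_right.2 hIE
  have hcard : #(Eᶜ \ I) + #E + #I = n := by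
    rw [add_right_comm, card_sdiff_add_card_eq_card hIEc, card_compl_add_card, Fintype.card_fin]
  have hdisj : ∀ T ∈ (Eᶜ \ I).powerset, Disjoint I T := fun T hT =>
    disjoint_of_subset_right (mem_powerset.1 hT) disjoint_sdiff
  rw [filter_powerset_univ_eq_Icc, Icc_eq_image_powerset hIEc,
    sum_image fun T hT T' hT' h => ?_]
  · calc _ = ∑ T ∈ (Eᶜ \ I).powerset, betaNat (t + #T) (#E + #((Eᶜ \ I) \ T)) := by
          refine sum_congr rfl fun T hT => ?_
          have hTU := mem_powerset.1 hT
          have := card_le_card hTU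
          rw [card_union_of_disjoint (hdisj T hT), ht, card_sdiff_of_subset hTU,
            Nat.add_right_comm, Nat.add_sub_cancel]
          exact one_div_mul_choose_eq_betaNat (by omega)
      _ = _ := by rw [sum_powerset_betaNat, betaNat_eq_one_div_mul_choose, ← ht]
  · rw [← union_sdiff_cancel_left (hdisj T hT), h, union_sdiff_cancel_left (hdisj T' hT')]

theorem stmt_12 (n : ℕ) (hn : 1 ≤ n) (i : Fin n) (I E : Finset (Fin n))
    (hIE : Disjoint I E) (hiI : i ∈ I) :
    ∑ S ∈ ((Finset.univ : Finset (Fin n)).powerset.filter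
          (fun S => I ⊆ S ∧ Disjoint E S)),
        (1 : ℝ) / ((n : ℝ) * ((n - 1).choose (S.card - 1) : ℝ))
      = 1 / ((I.card : ℝ) * ((I.card + E.card).choose I.card : ℝ)) :=
  stmt_12_general n i I E hIE hiI
end

section
/- Let I, E ⊆ {1, ..., n} be disjoint with i ∈ E, and let B := {S ⊆ {1, ..., n} : I ⊆ S, E ∩ S = ∅}. Let r := |I|, s := |I| + |E|. Then ∑_{S ∈ B} w(|S|) = 1/((s−r) · C(s, r)) with w(k) := 1/(n · C(n-1, k)). -/
/-!
Writing each admissible coalition as `I ∪ T`, with `T` an arbitrary set of the `m = n - s` players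
outside `I ∪ E`, the weight `w(|S|)` becomes `L (n - 1) (r + |T|)`, where
`L n k = 1 / ((n + 1) * C(n, k))` is Leibniz's harmonic triangle. Its rule
`L n k = L (n + 1) k + L (n + 1) (k + 1)` removes the free players one at a time, so the sum
collapses to `L (s - 1) r = 1 / ((s - r) * C(s, r))`.
-/

open Finset Nat

noncomputable def leibnizHarmonic (n k : ℕ) : ℝ := 1 / ((n + 1 : ℝ) * n.choose k)

lemma leibnizHarmonic_eq_factorial {n k : ℕ} (h : k ≤ n) :
    leibnizHarmonic n k = k ! * (n - k)! / (n + 1)! := by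
  rw [leibnizHarmonic, Nat.cast_choose ℝ h, Nat.factorial_succ]
  push_cast
  field_simp

lemma leibnizHarmonic_eq_add {n k : ℕ} (h : k ≤ n) :
    leibnizHarmonic n k = leibnizHarmonic (n + 1) k + leibnizHarmonic (n + 1) (k + 1) := by
  obtain ⟨d, rfl⟩ := Nat.exists_eq_add_of_le h
  rw [leibnizHarmonic_eq_factorial h, leibnizHarmonic_eq_factorial (by omega),
    leibnizHarmonic_eq_factorial (by omega), show k + d + 1 - k = d + 1 by omega,
    show k + d + 1 - (k + 1) = d by omega, Nat.add_sub_cancel_left]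
  simp only [Nat.factorial_succ]
  push_cast
  field_simp
  ring

lemma sum_powerset_leibnizHarmonic {α : Type*} [DecidableEq α] (A : Finset α) {N k : ℕ}
    (hk : k ≤ N) : ∑ T ∈ A.powerset, leibnizHarmonic (N + #A) (k + #T) = leibnizHarmonic N k := by
  induction A using Finset.induction_on with
  | empty => simp
  | insert a A ha ih =>
    rw [sum_powerset_insert ha, card_insert_of_notMem ha, ← ih, ← sum_add_distrib]
    refine sum_congr rfl fun T hT => ?_
    have hTA : #T ≤ #A := card_le_card (mem_powerset.mp hT)
    rw [card_insert_of_notMem fun haT => ha (mem_powerset.mp hT haT),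
      leibnizHarmonic_eq_add (by omega : k + #T ≤ N + #A)]
    rfl

lemma leibnizHarmonic_add_eq (r d : ℕ) :
    leibnizHarmonic (r + d) r = 1 / ((d + 1 : ℝ) * (r + d + 1).choose r) := by
  have key : ((r + d).choose r * (r + d + 1) : ℝ) = (r + d + 1).choose r * (d + 1) := by
    exact_mod_cast (show r + d + 1 - r = d + 1 by omega) ▸ Nat.choose_mul_succ_eq (r + d) r
  rw [leibnizHarmonic]
  push_cast
  rw [mul_comm _ ((r + d).choose r : ℝ), key, mul_comm]

lemma sum_filter_subset_disjoint {α M : Type*} [Fintype α] [DecidableEq α] [AddCommMonoid M]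
    {I E : Finset α} (h : Disjoint I E) (f : Finset α → M) :
    ∑ S ∈ univ.powerset.filter (fun S => I ⊆ S ∧ Disjoint E S), f S
      = ∑ T ∈ (Eᶜ \ I).powerset, f (I ∪ T) := by
  have hIcc : univ.powerset.filter (fun S => I ⊆ S ∧ Disjoint E S) = Icc I Eᶜ := by
    ext S
    simp [subset_compl_iff_disjoint_right, disjoint_comm]
  rw [hIcc, Icc_eq_image_powerset (subset_compl_iff_disjoint_right.mpr h), sum_image]
  intro T hT T' hT' hTT'
  simp only [coe_powerset, Set.mem_preimage, Set.mem_powerset_iff, coe_subset] at hT hT'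
  rw [← union_sdiff_cancel_left (disjoint_of_subset_right hT disjoint_sdiff),
    ← union_sdiff_cancel_left (disjoint_of_subset_right hT' disjoint_sdiff)]
  exact congrArg (· \ I) hTT'

theorem stmt_13_general (n : ℕ) (i : Fin n) (I E : Finset (Fin n))
    (hIE : Disjoint I E) (hiE : i ∈ E) :
    ∑ S ∈ ((Finset.univ : Finset (Fin n)).powerset.filter
          (fun S => I ⊆ S ∧ Disjoint E S)),
        (1 : ℝ) / ((n : ℝ) * ((n - 1).choose S.card : ℝ))
      = 1 / ((((I.card + E.card : ℕ) : ℝ) - (I.card : ℝ)) *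
          ((I.card + E.card).choose I.card : ℝ)) := by
  obtain ⟨d, hE⟩ := Nat.exists_eq_add_one_of_ne_zero (card_ne_zero_of_mem hiE)
  have hIEc : I ⊆ Eᶜ := subset_compl_iff_disjoint_right.mpr hIE
  have hn : n = #I + d + #(Eᶜ \ I) + 1 := by
    have hI := card_le_card hIEc
    have hEn := card_le_univ E
    rw [card_sdiff_of_subset hIEc]
    rw [card_compl, Fintype.card_fin] at hI ⊢
    rw [Fintype.card_fin] at hEn
    omega
  rw [sum_filter_subset_disjoint hIE]
  calc _ = ∑ T ∈ (Eᶜ \ I).powerset, leibnizHarmonic (#I + d + #(Eᶜ \ I)) (#I + #T) := by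
        refine sum_congr rfl fun T hT => ?_
        rw [card_union_of_disjoint (disjoint_of_subset_right (mem_powerset.mp hT) disjoint_sdiff),
          leibnizHarmonic, show n - 1 = #I + d + #(Eᶜ \ I) by omega,
          show (n : ℝ) = ((#I + d + #(Eᶜ \ I) : ℕ) : ℝ) + 1 by exact_mod_cast hn]
    _ = leibnizHarmonic (#I + d) #I := sum_powerset_leibnizHarmonic _ (Nat.le_add_right _ _)
    _ = _ := by
        rw [leibnizHarmonic_add_eq, hE]
        push_cast
        ring_nf

theorem stmt_13 (n : ℕ) (hn : 1 ≤ n) (i : Fin n) (I E : Finset (Fin n))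
    (hIE : Disjoint I E) (hiE : i ∈ E) :
    ∑ S ∈ ((Finset.univ : Finset (Fin n)).powerset.filter
          (fun S => I ⊆ S ∧ Disjoint E S)),
        (1 : ℝ) / ((n : ℝ) * ((n - 1).choose S.card : ℝ))
      = 1 / ((((I.card + E.card : ℕ) : ℝ) - (I.card : ℝ)) *
          ((I.card + E.card).choose I.card : ℝ)) :=
  stmt_13_general n i I E hIE hiE
end

section
/- Let n ≥ 1 and i ∈ {1, ..., n}. Suppose B_1, ..., B_K is a partition of the full power set of {1, ..., n}, where each B_j is defined by disjoint included/excluded feature sets I_j, E_j ⊆ {1, ..., n} via B_j = {S : I_j ⊆ S, E_j ∩ S = ∅}. Let v be a value function with per-branch bounds l_j ≤ v(S) ≤ u_j for all S ∈ B_j, and classify branches as B_{+i} (i ∈ I_j), B_{−i} (i ∈ E_j), B_{±i} (otherwise). With Λ_j := 1/((s_j+1)·C(s_j, r_j)), Λ_j^− := Λ_j·(s_j+1)/r_j, Λ_j^+ := Λ_j·(s_j+1)/(s_j−r_j), where r_j := |I_j|, s_j := |I_j|+|E_j|, the Shapley value φ_i := ∑_{S ⊆ [n]\{i}} w(|S|)·(v(S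 ∪ {i}) − v(S)) with w(k) := 1/(n·C(n-1,k)) satisfies: ∑_{j ∈ +i} Λ_j^− l_j + ∑_{j ∈ ±i} Λ_j (l_j − u_j) − ∑_{j ∈ −i} Λ_j^+ u_j ≤ φ_i ≤ ∑_{j ∈ +i} Λ_j^− u_j + ∑_{j ∈ ±i} Λ_j (u_j − l_j) − ∑_{j ∈ −i} Λ_j^+ l_j. -/
/-!
The Shapley weight `w(|S|)` is the probability that `S` is exactly the set of players preceding
`i` in a uniformly random ordering. Hence the total weight of the coalitions `S ⊆ [n] \ {i}`
containing `M` and avoiding `B` is the probability that `M` precedes `i` and `B` follows it,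
`|M|! |B|! / (|M| + |B| + 1)!`; this is proved by letting the players outside `M ∪ B ∪ {i}` join
`M` or `B` one at a time, using the recurrence `β(a + 1, b) + β(a, b + 1) = β(a, b)` of the Beta
function. Now split `φ_i` into the weighted sums of `v(S ∪ {i})` and of `v(S)` and each of these
along the partition: on the part belonging to branch `j`, `v` lies between `l_j` and `u_j`, and
the total weight of that part is `Λ_j^−` (for `S ∪ {i}`, if `i ∈ I_j`), `Λ_j^+` (for `S`, if
`i ∈ E_j`), `Λ_j` (for both, if `i` is free in branch `j`) or `0`.
-/

open Finset

namespace Shapley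

open scoped Nat

noncomputable section

/-- `branchWeight r (s - r)`, `branchWeightIncluded r (s - r)` and
`branchWeightExcluded r (s - r)` are the paper's `Λ`, `Λ^−` and `Λ^+`. -/
def branchWeight (a b : ℕ) : ℝ := 1 / (((a + b : ℕ) + 1 : ℝ) * ((a + b).choose a : ℝ))

def branchWeightIncluded (a b : ℕ) : ℝ := branchWeight a b * (((a + b : ℕ) + 1 : ℝ) / a)

def branchWeightExcluded (a b : ℕ) : ℝ :=
  branchWeight a b * (((a + b : ℕ) + 1 : ℝ) / ((a + b : ℕ) - a))

lemma branchWeight_eq_factorial (a b : ℕ) : branchWeight a b = a ! * b ! / (a + b + 1)! := by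
  have h := Nat.choose_mul_factorial_mul_factorial (Nat.le_add_right a b)
  rw [Nat.add_sub_cancel_left] at h
  rw [branchWeight, Nat.factorial_succ, ← h]
  push_cast
  field_simp

lemma branchWeight_add_one_left_add_branchWeight_add_one_right (a b : ℕ) :
    branchWeight (a + 1) b + branchWeight a (b + 1) = branchWeight a b := by
  simp only [branchWeight_eq_factorial, show a + 1 + b + 1 = (a + b + 1) + 1 by ring,
    show a + (b + 1) + 1 = (a + b + 1) + 1 by ring, Nat.factorial_succ]
  push_cast
  field_simp
  ring

lemma branchWeight_sub_one_left {a : ℕ} (b : ℕ) (ha : 0 < a) :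
    branchWeight (a - 1) b = branchWeightIncluded a b := by
  obtain ⟨a, rfl⟩ := Nat.exists_eq_add_of_lt ha
  simp only [branchWeightIncluded, branchWeight_eq_factorial, zero_add, Nat.add_sub_cancel,
    show a + 1 + b + 1 = (a + b + 1) + 1 by ring, Nat.factorial_succ]
  push_cast
  field_simp
  ring

lemma branchWeight_sub_one_right (a : ℕ) {b : ℕ} (hb : 0 < b) :
    branchWeight a (b - 1) = branchWeightExcluded a b := by
  obtain ⟨b, rfl⟩ := Nat.exists_eq_add_of_lt hb
  simp only [branchWeightExcluded, branchWeight_eq_factorial, zero_add, Nat.add_sub_cancel,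
    show a + (b + 1) + 1 = (a + b + 1) + 1 by ring, Nat.factorial_succ]
  push_cast
  field_simp
  ring

def shapleyWeight (n k : ℕ) : ℝ := 1 / ((n : ℝ) * ((n - 1).choose k : ℝ))

lemma shapleyWeight_nonneg (n k : ℕ) : 0 ≤ shapleyWeight n k := by
  unfold shapleyWeight
  positivity

lemma shapleyWeight_eq_branchWeight {n k : ℕ} (hk : k < n) :
    shapleyWeight n k = branchWeight k (n - 1 - k) := by
  rw [shapleyWeight, branchWeight, Nat.add_sub_cancel' (by omega), Nat.cast_pred (by omega),
    sub_add_cancel]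

variable {α : Type*} [DecidableEq α]

theorem sum_branchWeight_filter_powerset {U M B : Finset α} (hM : M ⊆ U) (hB : B ⊆ U)
    (hMB : Disjoint M B) :
    ∑ S ∈ U.powerset with M ⊆ S ∧ Disjoint B S, branchWeight #S (#U - #S) =
      branchWeight #M #B := by
  generalize hd : #(U \ (M ∪ B)) = d
  induction d generalizing M B with
  | zero =>
    have hU : U = M ∪ B :=
      (union_subset hM hB).antisymm' (sdiff_eq_empty_iff_subset.mp (card_eq_zero.mp hd))
    have hfilter : {S ∈ U.powerset | M ⊆ S ∧ Disjoint B S} = {M} := by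
      ext S
      simp only [mem_filter, mem_powerset, mem_singleton, hU]
      constructor
      · rintro ⟨hSU, hMS, hBS⟩
        exact Subset.antisymm (fun x hx => (mem_union.mp (hSU hx)).resolve_right
          (disjoint_left.mp hBS.symm hx)) hMS
      · rintro rfl
        exact ⟨subset_union_left, subset_rfl, hMB.symm⟩
    rw [hfilter, sum_singleton, hU, card_union_of_disjoint hMB, Nat.add_sub_cancel_left]
  | succ d ih =>
    obtain ⟨x, hx⟩ : (U \ (M ∪ B)).Nonempty := card_pos.mp (by omega)
    obtain ⟨hxU, hxMB⟩ := mem_sdiff.mp hx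
    rw [mem_union, not_or] at hxMB
    have hcard : ∀ M' B' : Finset α, M' ∪ B' = insert x (M ∪ B) → #(U \ (M' ∪ B')) = d := by
      intro M' B' h
      rw [h, sdiff_insert, card_erase_of_mem hx, hd, Nat.add_sub_cancel]
    rw [← sum_filter_add_sum_filter_not _ (fun S => x ∈ S), filter_filter, filter_filter]
    have hin := ih (insert_subset hxU hM) hB (disjoint_insert_left.mpr ⟨hxMB.2, hMB⟩)
      (hcard _ _ (by rw [insert_union]))
    have hout := ih hM (insert_subset hxU hB) (disjoint_insert_right.mpr ⟨hxMB.1, hMB⟩)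
      (hcard _ _ (by rw [union_insert]))
    rw [card_insert_of_notMem hxMB.1] at hin
    rw [card_insert_of_notMem hxMB.2] at hout
    rw [← branchWeight_add_one_left_add_branchWeight_add_one_right, ← hin, ← hout]
    congr 1
    · refine sum_congr (filter_congr fun S _ => ?_) fun _ _ => rfl
      rw [insert_subset_iff]
      tauto
    · refine sum_congr (filter_congr fun S _ => ?_) fun _ _ => rfl
      rw [disjoint_insert_left]
      tauto

theorem sum_mul_le_sum_mul_sum_filter {σ ι : Type*} [Fintype ι] (s : Finset σ) (B : ι → σ → Prop)
    [∀ j, DecidablePred (B j)] (hB : ∀ a ∈ s, ∃! j, B j a) (w x : σ → ℝ) (u : ι → ℝ)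
    (hw : ∀ a ∈ s, 0 ≤ w a) (hx : ∀ j, ∀ a ∈ s, B j a → x a ≤ u j) :
    ∑ a ∈ s, w a * x a ≤ ∑ j, u j * ∑ a ∈ s with B j a, w a := by
  have hmass : ∀ j, u j * ∑ a ∈ s with B j a, w a = ∑ a ∈ s, if B j a then w a * u j else 0 :=
    fun j => by
      rw [sum_filter, mul_sum]
      exact sum_congr rfl fun a _ => by split_ifs <;> ring
  simp_rw [hmass]
  rw [sum_comm]
  refine sum_le_sum fun a ha => ?_
  obtain ⟨j, hj, huniq⟩ := hB a ha
  rw [Fintype.sum_eq_single j fun j' hj' => if_neg fun h => hj' (huniq j' h), if_pos hj]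
  exact mul_le_mul_of_nonneg_left (hx j a ha hj) (hw a ha)

theorem sum_mul_sum_filter_le_sum_mul {σ ι : Type*} [Fintype ι] (s : Finset σ)
    (B : ι → σ → Prop) [∀ j, DecidablePred (B j)] (hB : ∀ a ∈ s, ∃! j, B j a)
    (w x : σ → ℝ) (l : ι → ℝ) (hw : ∀ a ∈ s, 0 ≤ w a) (hx : ∀ j, ∀ a ∈ s, B j a → l j ≤ x a) :
    ∑ j, l j * ∑ a ∈ s with B j a, w a ≤ ∑ a ∈ s, w a * x a := by
  have h := sum_mul_le_sum_mul_sum_filter s B hB w (-x) (-l) hw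
    fun j a ha hBa => neg_le_neg (hx j a ha hBa)
  simpa only [Pi.neg_apply, mul_neg, neg_mul, sum_neg_distrib, neg_le_neg_iff] using h

variable [Fintype α]

def shapleyValue (v : Finset α → ℝ) (i : α) : ℝ :=
  ∑ S ∈ (univ \ {i}).powerset, shapleyWeight (Fintype.card α) #S * (v (insert i S) - v S)

theorem sum_shapleyWeight_filter_powerset {i : α} {M B : Finset α} (hMB : Disjoint M B)
    (hiM : i ∉ M) (hiB : i ∉ B) :
    ∑ S ∈ (univ \ {i}).powerset with M ⊆ S ∧ Disjoint B S, shapleyWeight (Fintype.card α) #S =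
      branchWeight #M #B := by
  have hU : #(univ \ {i}) = Fintype.card α - 1 := by
    rw [card_sdiff_of_subset (subset_univ _), card_singleton, Finset.card_univ]
  have hsub : ∀ {T : Finset α}, i ∉ T → T ⊆ univ \ {i} := fun hT =>
    subset_sdiff.mpr ⟨subset_univ _, disjoint_singleton_right.mpr hT⟩
  rw [← sum_branchWeight_filter_powerset (hsub hiM) (hsub hiB) hMB]
  refine sum_congr rfl fun S hS => ?_
  have hS := card_le_card (mem_powerset.mp (mem_filter.mp hS).1)
  have hα : 0 < Fintype.card α := Fintype.card_pos_iff.mpr ⟨i⟩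
  rw [shapleyWeight_eq_branchWeight (by omega), hU]

def branchMassWith (i : α) (I E : Finset α) : ℝ :=
  ∑ S ∈ (univ \ {i}).powerset with I ⊆ insert i S ∧ Disjoint E (insert i S),
    shapleyWeight (Fintype.card α) #S

def branchMassWithout (i : α) (I E : Finset α) : ℝ :=
  ∑ S ∈ (univ \ {i}).powerset with I ⊆ S ∧ Disjoint E S, shapleyWeight (Fintype.card α) #S

lemma branchMassWith_of_mem {i : α} {I E : Finset α} (h : i ∈ E) : branchMassWith i I E = 0 :=
  sum_eq_zero fun _ hS => ((disjoint_insert_right.mp (mem_filter.mp hS).2.2).1 h).elim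

lemma branchMassWithout_of_mem {i : α} {I E : Finset α} (h : i ∈ I) :
    branchMassWithout i I E = 0 :=
  sum_eq_zero fun _ hS => (notMem_of_mem_powerset_of_notMem (mem_filter.mp hS).1
    (notMem_sdiff_of_mem_right (mem_singleton_self i)) ((mem_filter.mp hS).2.1 h)).elim

lemma branchMassWith_eq {i : α} {I E : Finset α} (hIE : Disjoint I E) (h : i ∉ E) :
    branchMassWith i I E = branchWeight #(I.erase i) #E := by
  rw [branchMassWith, ← sum_shapleyWeight_filter_powerset (hIE.mono_left (erase_subset i I))
    (notMem_erase i I) h]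
  refine sum_congr (filter_congr fun S _ => ?_) fun _ _ => rfl
  rw [subset_insert_iff, disjoint_insert_right]
  tauto

lemma branchMassWithout_eq {i : α} {I E : Finset α} (hIE : Disjoint I E) (h : i ∉ I) :
    branchMassWithout i I E = branchWeight #I #(E.erase i) := by
  rw [branchMassWithout, ← sum_shapleyWeight_filter_powerset (hIE.mono_right (erase_subset i E))
    h (notMem_erase i E)]
  refine sum_congr (filter_congr fun S hS => ?_) fun _ _ => rfl
  have hiS : i ∉ S :=
    notMem_of_mem_powerset_of_notMem hS (notMem_sdiff_of_mem_right (mem_singleton_self i))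
  rw [disjoint_erase_comm, erase_eq_of_notMem hiS]

lemma mul_branchMassWith_sub_mul_branchMassWithout {i : α} {I E : Finset α}
    (hIE : Disjoint I E) (x y : ℝ) :
    x * branchMassWith i I E - y * branchMassWithout i I E =
      (if i ∈ I then branchWeightIncluded #I #E * x else 0)
        + (if i ∉ I ∧ i ∉ E then branchWeight #I #E * (x - y) else 0)
        - (if i ∈ E then branchWeightExcluded #I #E * y else 0) := by
  by_cases hI : i ∈ I
  · have hE : i ∉ E := disjoint_left.mp hIE hI
    rw [branchMassWith_eq hIE hE, branchMassWithout_of_mem hI, card_erase_of_mem hI,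
      branchWeight_sub_one_left _ (card_pos.mpr ⟨i, hI⟩)]
    simp [hI, hE]
    ring
  by_cases hE : i ∈ E
  · rw [branchMassWith_of_mem hE, branchMassWithout_eq hIE hI, card_erase_of_mem hE,
      branchWeight_sub_one_right _ (card_pos.mpr ⟨i, hE⟩)]
    simp [hI, hE]
    ring
  · rw [branchMassWith_eq hIE hE, branchMassWithout_eq hIE hI, erase_eq_of_notMem hI,
      erase_eq_of_notMem hE]
    simp [hI, hE]
    ring

variable {ι : Type*} [Fintype ι] {I E : ι → Finset α} {v : Finset α → ℝ} {l u : ι → ℝ}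

theorem shapleyValue_mem_Icc (hpart : ∀ S, ∃! j, I j ⊆ S ∧ Disjoint (E j) S)
    (hl : ∀ j, ∀ S, I j ⊆ S → Disjoint (E j) S → l j ≤ v S)
    (hu : ∀ j, ∀ S, I j ⊆ S → Disjoint (E j) S → v S ≤ u j) (i : α) :
    shapleyValue v i ∈ Set.Icc
      (∑ j, (l j * branchMassWith i (I j) (E j) - u j * branchMassWithout i (I j) (E j)))
      (∑ j, (u j * branchMassWith i (I j) (E j) - l j * branchMassWithout i (I j) (E j))) := by
  have hw : ∀ S ∈ (univ \ {i}).powerset, 0 ≤ shapleyWeight (Fintype.card α) #S :=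
    fun _ _ => shapleyWeight_nonneg _ _
  rw [shapleyValue]
  simp only [mul_sub, sum_sub_distrib]
  exact ⟨sub_le_sub
      (sum_mul_sum_filter_le_sum_mul _ _ (fun S _ => hpart (insert i S)) _ _ _ hw
        fun j _ _ h => hl j _ h.1 h.2)
      (sum_mul_le_sum_mul_sum_filter _ _ (fun S _ => hpart S) _ _ _ hw
        fun j _ _ h => hu j _ h.1 h.2),
    sub_le_sub
      (sum_mul_le_sum_mul_sum_filter _ _ (fun S _ => hpart (insert i S)) _ _ _ hw
        fun j _ _ h => hu j _ h.1 h.2)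
      (sum_mul_sum_filter_le_sum_mul _ _ (fun S _ => hpart S) _ _ _ hw
        fun j _ _ h => hl j _ h.1 h.2)⟩

theorem shapleyValue_mem_bounds (hIE : ∀ j, Disjoint (I j) (E j))
    (hpart : ∀ S, ∃! j, I j ⊆ S ∧ Disjoint (E j) S)
    (hl : ∀ j, ∀ S, I j ⊆ S → Disjoint (E j) S → l j ≤ v S)
    (hu : ∀ j, ∀ S, I j ⊆ S → Disjoint (E j) S → v S ≤ u j) (i : α) :
    (∑ j with i ∈ I j, branchWeightIncluded #(I j) #(E j) * l j)
        + (∑ j with i ∉ I j ∧ i ∉ E j, branchWeight #(I j) #(E j) * (l j - u j))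
        - (∑ j with i ∈ E j, branchWeightExcluded #(I j) #(E j) * u j)
      ≤ shapleyValue v i ∧
    shapleyValue v i ≤ (∑ j with i ∈ I j, branchWeightIncluded #(I j) #(E j) * u j)
        + (∑ j with i ∉ I j ∧ i ∉ E j, branchWeight #(I j) #(E j) * (u j - l j))
        - (∑ j with i ∈ E j, branchWeightExcluded #(I j) #(E j) * l j) := by
  have hsplit : ∀ x y : ι → ℝ,
      ∑ j, (x j * branchMassWith i (I j) (E j) - y j * branchMassWithout i (I j) (E j)) =
        (∑ j with i ∈ I j, branchWeightIncluded #(I j) #(E j) * x j)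
          + (∑ j with i ∉ I j ∧ i ∉ E j, branchWeight #(I j) #(E j) * (x j - y j))
          - (∑ j with i ∈ E j, branchWeightExcluded #(I j) #(E j) * y j) := fun x y => by
    simp only [sum_filter, ← sum_add_distrib, ← sum_sub_distrib]
    exact sum_congr rfl fun j _ => mul_branchMassWith_sub_mul_branchMassWithout (hIE j) _ _
  rw [← hsplit, ← hsplit]
  exact shapleyValue_mem_Icc hpart hl hu i

end

end Shapley

theorem stmt_14_general (n K : ℕ) (i : Fin n)
    (I E : Fin K → Finset (Fin n))
    (hIE : ∀ j, Disjoint (I j) (E j))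
    -- the branches `B j = {S : I j ⊆ S, E j ∩ S = ∅}` partition the full power set
    (hpart : ∀ S : Finset (Fin n), ∃! j : Fin K, I j ⊆ S ∧ Disjoint (E j) S)
    (v : Finset (Fin n) → ℝ) (l u : Fin K → ℝ)
    (hl : ∀ j, ∀ S : Finset (Fin n), I j ⊆ S → Disjoint (E j) S → l j ≤ v S)
    (hu : ∀ j, ∀ S : Finset (Fin n), I j ⊆ S → Disjoint (E j) S → v S ≤ u j) :
    -- abbreviations
    (fun (r s : Fin K → ℕ) (Λ Λm Λp : Fin K → ℝ) (φ : ℝ) =>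
      (∑ j ∈ Finset.univ.filter (fun j => i ∈ I j), Λm j * l j)
          + (∑ j ∈ Finset.univ.filter (fun j => i ∉ I j ∧ i ∉ E j),
              Λ j * (l j - u j))
          - (∑ j ∈ Finset.univ.filter (fun j => i ∈ E j), Λp j * u j)
        ≤ φ ∧
      φ ≤ (∑ j ∈ Finset.univ.filter (fun j => i ∈ I j), Λm j * u j)
          + (∑ j ∈ Finset.univ.filter (fun j => i ∉ I j ∧ i ∉ E j),
              Λ j * (u j - l j))
          - (∑ j ∈ Finset.univ.filter (fun j => i ∈ E j), Λp j * l j))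
      (fun j => (I j).card)
      (fun j => (I j).card + (E j).card)
      (fun j => 1 / ((((I j).card + (E j).card : ℕ) + 1 : ℝ) *
        (((I j).card + (E j).card).choose (I j).card : ℝ)))
      (fun j => (1 / ((((I j).card + (E j).card : ℕ) + 1 : ℝ) *
        (((I j).card + (E j).card).choose (I j).card : ℝ))) *
        ((((I j).card + (E j).card : ℕ) + 1 : ℝ) / ((I j).card : ℝ)))
      (fun j => (1 / ((((I j).card + (E j).card : ℕ) + 1 : ℝ) *
        (((I j).card + (E j).card).choose (I j).card : ℝ))) *
        ((((I j).card + (E j).card : ℕ) + 1 : ℝ) /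
          ((((I j).card + (E j).card : ℕ) : ℝ) - ((I j).card : ℝ))))
      (∑ S ∈ ((Finset.univ : Finset (Fin n)) \ {i}).powerset,
        (1 / ((n : ℝ) * ((n - 1).choose S.card : ℝ))) * (v (insert i S) - v S)) := by
  have h := Shapley.shapleyValue_mem_bounds hIE hpart hl hu i
  rw [Shapley.shapleyValue, Fintype.card_fin] at h
  exact h

theorem stmt_14 (n K : ℕ) (hn : 1 ≤ n) (i : Fin n)
    (I E : Fin K → Finset (Fin n))
    (hIE : ∀ j, Disjoint (I j) (E j))
    -- the branches `B j = {S : I j ⊆ S, E j ∩ S = ∅}` partition the full power set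
    (hpart : ∀ S : Finset (Fin n), ∃! j : Fin K, I j ⊆ S ∧ Disjoint (E j) S)
    (v : Finset (Fin n) → ℝ) (l u : Fin K → ℝ)
    (hl : ∀ j, ∀ S : Finset (Fin n), I j ⊆ S → Disjoint (E j) S → l j ≤ v S)
    (hu : ∀ j, ∀ S : Finset (Fin n), I j ⊆ S → Disjoint (E j) S → v S ≤ u j) :
    -- abbreviations
    (fun (r s : Fin K → ℕ) (Λ Λm Λp : Fin K → ℝ) (φ : ℝ) =>
      (∑ j ∈ Finset.univ.filter (fun j => i ∈ I j), Λm j * l j)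
          + (∑ j ∈ Finset.univ.filter (fun j => i ∉ I j ∧ i ∉ E j),
              Λ j * (l j - u j))
          - (∑ j ∈ Finset.univ.filter (fun j => i ∈ E j), Λp j * u j)
        ≤ φ ∧
      φ ≤ (∑ j ∈ Finset.univ.filter (fun j => i ∈ I j), Λm j * u j)
          + (∑ j ∈ Finset.univ.filter (fun j => i ∉ I j ∧ i ∉ E j),
              Λ j * (u j - l j))
          - (∑ j ∈ Finset.univ.filter (fun j => i ∈ E j), Λp j * l j))
      (fun j => (I j).card)
      (fun j => (I j).card + (E j).card)
      (fun j => 1 / ((((I j).card + (E j).card : ℕ) + 1 : ℝ) *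
        (((I j).card + (E j).card).choose (I j).card : ℝ)))
      (fun j => (1 / ((((I j).card + (E j).card : ℕ) + 1 : ℝ) *
        (((I j).card + (E j).card).choose (I j).card : ℝ))) *
        ((((I j).card + (E j).card : ℕ) + 1 : ℝ) / ((I j).card : ℝ)))
      (fun j => (1 / ((((I j).card + (E j).card : ℕ) + 1 : ℝ) *
        (((I j).card + (E j).card).choose (I j).card : ℝ))) *
        ((((I j).card + (E j).card : ℕ) + 1 : ℝ) /
          ((((I j).card + (E j).card : ℕ) : ℝ) - ((I j).card : ℝ))))
      (∑ S ∈ ((Finset.univ : Finset (Fin n)) \ {i}).powerset,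
        (1 / ((n : ℝ) * ((n - 1).choose S.card : ℝ))) * (v (insert i S) - v S)) :=
  stmt_14_general n K i I E hIE hpart v l u hl hu
end
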